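/- For every interval representation R of G_β, we have ν_R(u) ≥ ν(G_β); that is, R contains a chain of strictly nested vertex intervals of length at least ν(G_β) whose outermost interval is the interval of the added vertex u. -/

import Mathlib

open Set

/-- An interval representation of a simple graph `G`: each vertex `v` gets a nonempty
closed interval `[l v, r v] ⊆ ℝ`, and two distinct vertices are adjacent iff their
intervals intersect. -/
structure IntervalRep {V : Type*} (G : SimpleGraph V) where
  l : V → ℝ
  r : V → ℝ
  le : ∀ v, l v ≤ r v
  adj_iff : ∀ u v : V, u ≠ v →
    (G.Adj u v ↔ (Icc (l u) (r u) ∩ Icc (l v) (r v)).Nonempty)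

namespace IntervalRep

variable {V : Type*} {G : SimpleGraph V}

/-- The interval of a vertex. -/
def itv (R : IntervalRep G) (v : V) : Set ℝ := Icc (R.l v) (R.r v)

/-- The nesting `ν(R)`: the maximum length of a chain of strictly nested vertex intervals. -/
noncomputable def nesting (R : IntervalRep G) : ℕ :=
  sSup {k : ℕ | ∃ f : Fin k → V, ∀ i j : Fin k, i < j → R.itv (f i) ⊂ R.itv (f j)}

/-- `ν_R(x)`: the maximum length of a chain of strictly nested vertex intervals whose
outermost interval is `I(x)` (counting `x` itself). -/
noncomputable def nuAt (R : IntervalRep G) (x : V) : ℕ :=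
  sSup {k : ℕ | ∃ f : Fin k → V,
    (∀ i j : Fin k, i < j → R.itv (f i) ⊂ R.itv (f j)) ∧
    ∃ h : 0 < k, f ⟨k - 1, by omega⟩ = x}

end IntervalRep

/-- A graph is an interval graph if it admits an interval representation. -/
def IsIntervalGraph {V : Type*} (G : SimpleGraph V) : Prop := Nonempty (IntervalRep G)

/-- The nesting number `ν(G)`: the minimum nesting over all interval representations. -/
noncomputable def nu {V : Type*} (G : SimpleGraph V) : ℕ :=
  sInf {n : ℕ | ∃ R : IntervalRep G, R.nesting = n}

/-- `G_α`: add vertices `u, a₁, a₂, b₁, b₂` (coded as `0,1,2,3,4`), with `u` adjacent to all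
of `G` and to `a₁, b₁`; `a₁ ~ a₂` and `b₁ ~ b₂`. -/
def Galpha {V : Type*} (G : SimpleGraph V) : SimpleGraph (V ⊕ Fin 5) :=
  SimpleGraph.fromRel fun x y =>
    match x, y with
    | Sum.inl a, Sum.inl b => G.Adj a b
    | Sum.inl _, Sum.inr i => i = 0
    | Sum.inr _, Sum.inl _ => False
    | Sum.inr i, Sum.inr j =>
        i = 0 ∧ j = 1 ∨ i = 1 ∧ j = 2 ∨ i = 0 ∧ j = 3 ∨ i = 3 ∧ j = 4

/-- `G_β`: add vertices `u, a₁, a₂` (coded as `0,1,2`), with `u` adjacent to all of `G`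
and to `a₁`; `a₁ ~ a₂`. -/
def Gbeta {V : Type*} (G : SimpleGraph V) : SimpleGraph (V ⊕ Fin 3) :=
  SimpleGraph.fromRel fun x y =>
    match x, y with
    | Sum.inl a, Sum.inl b => G.Adj a b
    | Sum.inl _, Sum.inr i => i = 0
    | Sum.inr _, Sum.inl _ => False
    | Sum.inr i, Sum.inr j => i = 0 ∧ j = 1 ∨ i = 1 ∧ j = 2

/-- `G_γ`: add vertices `u, v, a₁, a₂, b₁, b₂` (coded as `0,1,2,3,4,5`), with `u ~ v`, both
adjacent to all of `G`; `u ~ a₁`, `a₁ ~ a₂`, `v ~ b₁`, `b₁ ~ b₂`. -/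
def Ggamma {V : Type*} (G : SimpleGraph V) : SimpleGraph (V ⊕ Fin 6) :=
  SimpleGraph.fromRel fun x y =>
    match x, y with
    | Sum.inl a, Sum.inl b => G.Adj a b
    | Sum.inl _, Sum.inr i => i = 0 ∨ i = 1
    | Sum.inr _, Sum.inl _ => False
    | Sum.inr i, Sum.inr j =>
        i = 0 ∧ j = 1 ∨ i = 0 ∧ j = 2 ∨ i = 2 ∧ j = 3 ∨ i = 1 ∧ j = 4 ∨ i = 4 ∧ j = 5

/-- The disjoint union of a family of graphs, on the sigma type of their vertex sets. -/
def sigmaGraph {p : ℕ} {V : Fin p → Type*} (G : ∀ i, SimpleGraph (V i)) :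
    SimpleGraph (Σ i, V i) :=
  SimpleGraph.fromRel fun x y => ∃ h : x.1 = y.1, (G y.1).Adj (h ▸ x.2) y.2

/-- The graph obtained from `H` by adding one new vertex adjacent to every vertex of `H`. -/
def joinVertex {W : Type*} (H : SimpleGraph W) : SimpleGraph (W ⊕ Unit) :=
  SimpleGraph.fromRel fun x y =>
    match x, y with
    | Sum.inl a, Sum.inl b => H.Adj a b
    | Sum.inl _, Sum.inr _ => True
    | _, _ => False

/-!
Write `u, a₁, a₂` for `inr 0, inr 1, inr 2`. As `u` and `a₂` are not adjacent, after reflecting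
the line we may assume `I(u)` lies left of `I(a₂)`; then every vertex `x` of `G` has `r x < r u`.
Rebuild the representation: a vertex of `G` whose interval starts inside `I(u)` keeps it, and every
other vertex gets an interval of the common length `K = r u - l u + 1`, which exceeds the length of
every kept interval (`[r x - K, r x]` for `x` in `G`, and consecutive touching intervals ending at
`r u`, `r u + K`, `r u + 2K` for `u, a₁, a₂`). Intervals of equal length are never strictly
nested, so only kept intervals, which lie strictly inside `I(u)`, can be strictly nested in the
new representation. Replacing the top of one of its chains by `u` therefore gives a chain of `R`
of the same length ending at `I(u)`.
-/

theorem Icc_inter_Icc_nonempty_iff {a b c d : ℝ} (hab : a ≤ b) (hcd : c ≤ d) :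
    (Icc a b ∩ Icc c d).Nonempty ↔ a ≤ d ∧ c ≤ b := by
  rw [Icc_inter_Icc, nonempty_Icc, sup_le_iff, le_inf_iff, le_inf_iff]
  exact ⟨fun h => ⟨h.1.2, h.2.1⟩, fun h => ⟨⟨hab, h.1⟩, h.2, hcd⟩⟩

theorem sub_lt_sub_of_Icc_ssubset_Icc {a b c d : ℝ} (hab : a ≤ b) (h : Icc a b ⊂ Icc c d) :
    b - a < d - c := by
  obtain ⟨hca, hbd⟩ := (Icc_subset_Icc_iff hab).mp h.subset
  by_contra! hle
  exact h.ne (by rw [show a = c by linarith, show b = d by linarith])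

namespace IntervalRep

variable {V : Type*} {G : SimpleGraph V}

theorem adj_iff_le (R : IntervalRep G) {p q : V} (h : p ≠ q) :
    G.Adj p q ↔ R.l p ≤ R.r q ∧ R.l q ≤ R.r p := by
  rw [R.adj_iff p q h, Icc_inter_Icc_nonempty_iff (R.le p) (R.le q)]

theorem r_lt_l_or_r_lt_l_of_not_adj (R : IntervalRep G) {p q : V} (h : p ≠ q)
    (hn : ¬ G.Adj p q) : R.r p < R.l q ∨ R.r q < R.l p := by
  rw [R.adj_iff_le h, not_and_or, not_le, not_le] at hn
  exact hn.symm

def ofLE (l r : V → ℝ) (le : ∀ v, l v ≤ r v)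
    (adj_iff_le : ∀ p q, p ≠ q → (G.Adj p q ↔ l p ≤ r q ∧ l q ≤ r p)) : IntervalRep G where
  l := l
  r := r
  le := le
  adj_iff p q h := by rw [adj_iff_le p q h, Icc_inter_Icc_nonempty_iff (le p) (le q)]

def neg (R : IntervalRep G) : IntervalRep G :=
  ofLE (fun v => -R.r v) (fun v => -R.l v) (fun v => neg_le_neg (R.le v)) fun p q h => by
    rw [R.adj_iff_le h, neg_le_neg_iff, neg_le_neg_iff, and_comm]

@[simp] theorem neg_l (R : IntervalRep G) (v : V) : R.neg.l v = -R.r v := rfl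

@[simp] theorem neg_r (R : IntervalRep G) (v : V) : R.neg.r v = -R.l v := rfl

theorem itv_neg (R : IntervalRep G) (v : V) : R.neg.itv v = -R.itv v := by
  simp [itv, neg_Icc]

@[simp] theorem nuAt_neg (R : IntervalRep G) (x : V) : R.neg.nuAt x = R.nuAt x := by
  simp only [nuAt, itv_neg, ssubset_iff_subset_not_subset, Set.neg_subset_neg]

theorem injective_of_chain (R : IntervalRep G) {k : ℕ} {f : Fin k → V}
    (hf : ∀ i j : Fin k, i < j → R.itv (f i) ⊂ R.itv (f j)) : f.Injective :=
  (show StrictMono (R.itv ∘ f) from hf).injective.of_comp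

theorem le_nuAt [Finite V] (R : IntervalRep G) {k : ℕ} {f : Fin k → V}
    (hf : ∀ i j : Fin k, i < j → R.itv (f i) ⊂ R.itv (f j)) (hk : 0 < k)
    {x : V} (hx : f ⟨k - 1, by omega⟩ = x) : k ≤ R.nuAt x := by
  refine le_csSup ⟨Nat.card V, ?_⟩ ⟨f, hf, hk, hx⟩
  rintro n ⟨g, hg, -⟩
  simpa using Nat.card_le_card_of_injective g (R.injective_of_chain hg)

theorem nu_le_nesting (R : IntervalRep G) : nu G ≤ R.nesting :=
  Nat.sInf_le ⟨R, rfl⟩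

theorem nesting_le_nuAt [Finite V] (R R' : IntervalRep G) (w : V)
    (h : ∀ p q, R'.itv p ⊂ R'.itv q → R'.itv p = R.itv p ∧ R.itv p ⊂ R.itv w) :
    R'.nesting ≤ R.nuAt w := by
  refine csSup_le' ?_
  rintro (_ | n) ⟨f, hf⟩
  · exact Nat.zero_le _
  have below : ∀ i, i ≠ Fin.last n → R'.itv (f i) = R.itv (f i) ∧ R.itv (f i) ⊂ R.itv w :=
    fun i hi => h _ _ (hf i _ (Fin.lt_last_iff_ne_last.mpr hi))
  refine R.le_nuAt (f := Function.update f (Fin.last n) w) (fun i j hij => ?_) n.succ_pos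
    (Function.update_self _ _ _)
  have hi : i ≠ Fin.last n := (hij.trans_le (Fin.le_last j)).ne
  rw [Function.update_of_ne hi]
  rcases eq_or_ne j (Fin.last n) with rfl | hj
  · rw [Function.update_self]
    exact (below i hi).2
  · rw [Function.update_of_ne hj, ← (below i hi).1, ← (below j hj).1]
    exact hf i j hij

end IntervalRep

namespace Gbeta

open Sum

variable {V : Type*} {G : SimpleGraph V} (R : IntervalRep (Gbeta G))

theorem l_u_le_r_inl (x : V) : R.l (inr 0) ≤ R.r (inl x) :=
  ((R.adj_iff_le (by simp)).mp (by simp [Gbeta])).1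

theorem l_inl_le_r_u (x : V) : R.l (inl x) ≤ R.r (inr 0) :=
  ((R.adj_iff_le (by simp)).mp (by simp [Gbeta] : (Gbeta G).Adj (inr 0) (inl x))).2

theorem u_lt_a₂_or_a₂_lt_u : R.r (inr 0) < R.l (inr 2) ∨ R.r (inr 2) < R.l (inr 0) :=
  R.r_lt_l_or_r_lt_l_of_not_adj (by simp) (by simp [Gbeta])

variable {R}

/-- `x` meets `I(u)` but not `I(a₁)`, which reaches from `I(u)` to `I(a₂)`. -/
theorem r_inl_lt_r_u (h : R.r (inr 0) < R.l (inr 2)) (x : V) : R.r (inl x) < R.r (inr 0) := by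
  have hua₁ := (R.adj_iff_le (by simp)).mp (by simp [Gbeta] : (Gbeta G).Adj (inr 0) (inr 1))
  have ha₁a₂ := (R.adj_iff_le (by simp)).mp (by simp [Gbeta] : (Gbeta G).Adj (inr 1) (inr 2))
  have hxa₁ : ¬ R.l (inr 1) ≤ R.r (inl x) := fun hle =>
    absurd ((R.adj_iff_le (by simp)).mpr ⟨by linarith [l_inl_le_r_u R x], hle⟩) (by simp [Gbeta])
  linarith

def unnestWidth (R : IntervalRep (Gbeta G)) : ℝ := R.r (inr 0) - R.l (inr 0) + 1

theorem unnestWidth_pos : 0 < unnestWidth R := by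
  unfold unnestWidth
  linarith [R.le (inr 0)]

noncomputable def unnestL (R : IntervalRep (Gbeta G)) : V ⊕ Fin 3 → ℝ :=
  Sum.elim
    (fun x => if R.l (inr 0) ≤ R.l (inl x) then R.l (inl x) else R.r (inl x) - unnestWidth R)
    ![R.r (inr 0) - unnestWidth R, R.r (inr 0), R.r (inr 0) + unnestWidth R]

def unnestR (R : IntervalRep (Gbeta G)) : V ⊕ Fin 3 → ℝ :=
  Sum.elim (fun x => R.r (inl x))
    ![R.r (inr 0), R.r (inr 0) + unnestWidth R, R.r (inr 0) + 2 * unnestWidth R]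

theorem unnestL_inl_le_iff (h : R.r (inr 0) < R.l (inr 2)) (x : V) {t : ℝ}
    (ht : R.l (inr 0) ≤ t) :
    unnestL R (inl x) ≤ t ↔ R.l (inl x) ≤ t := by
  have : R.r (inl x) - unnestWidth R < R.l (inr 0) := by
    unfold unnestWidth
    linarith [r_inl_lt_r_u h x]
  by_cases hx : R.l (inr 0) ≤ R.l (inl x)
  · simp [unnestL, hx]
  · simp only [unnestL, Sum.elim_inl, if_neg hx]
    exact iff_of_true (by linarith) (by linarith)

theorem unnestL_le_unnestR (p : V ⊕ Fin 3) : unnestL R p ≤ unnestR R p := by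
  have hK := unnestWidth_pos (R := R)
  rcases p with x | i
  · by_cases hx : R.l (inr 0) ≤ R.l (inl x)
    · simpa [unnestL, unnestR, hx] using R.le (inl x)
    · simp only [unnestL, unnestR, Sum.elim_inl, if_neg hx]
      linarith
  · fin_cases i <;> simp [unnestL, unnestR] <;> linarith

theorem adj_inl_inr_iff_unnest (h : R.r (inr 0) < R.l (inr 2)) (x : V) (i : Fin 3) :
    (Gbeta G).Adj (inl x) (inr i) ↔
      unnestL R (inl x) ≤ unnestR R (inr i) ∧ unnestL R (inr i) ≤ unnestR R (inl x) := by
  have hxu : unnestL R (inl x) ≤ R.r (inr 0) :=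
    (unnestL_inl_le_iff h x (R.le _)).mpr (l_inl_le_r_u R x)
  have hux : R.r (inr 0) - unnestWidth R ≤ R.r (inl x) := by
    unfold unnestWidth
    linarith [l_u_le_r_inl R x]
  have hxd := r_inl_lt_r_u h x
  have hK := unnestWidth_pos (R := R)
  fin_cases i
  · exact iff_of_true (by simp [Gbeta]) ⟨hxu, hux⟩
  · exact iff_of_false (by simp [Gbeta]) fun hc => hxd.not_ge hc.2
  · exact iff_of_false (by simp [Gbeta]) fun hc =>
      (hxd.trans (lt_add_of_pos_right _ hK)).not_ge hc.2

theorem adj_iff_unnest (h : R.r (inr 0) < R.l (inr 2)) {p q : V ⊕ Fin 3} (hpq : p ≠ q) :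
    (Gbeta G).Adj p q ↔ unnestL R p ≤ unnestR R q ∧ unnestL R q ≤ unnestR R p := by
  rcases p with x | i <;> rcases q with y | j
  · simp only [R.adj_iff_le hpq, unnestR, Sum.elim_inl,
      unnestL_inl_le_iff h x (l_u_le_r_inl R y), unnestL_inl_le_iff h y (l_u_le_r_inl R x)]
  · exact adj_inl_inr_iff_unnest h x j
  · rw [SimpleGraph.adj_comm, and_comm]
    exact adj_inl_inr_iff_unnest h y i
  · have hK := unnestWidth_pos (R := R)
    fin_cases i <;> fin_cases j <;> simp [Gbeta, unnestL, unnestR] at hpq ⊢ <;> intros <;> linarith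

theorem unnestR_sub_unnestL_le (h : R.r (inr 0) < R.l (inr 2)) (p : V ⊕ Fin 3) :
    unnestR R p - unnestL R p ≤ unnestWidth R := by
  rcases p with x | i
  · by_cases hx : R.l (inr 0) ≤ R.l (inl x)
    · simp only [unnestL, unnestR, Sum.elim_inl, if_pos hx, unnestWidth]
      linarith [r_inl_lt_r_u h x]
    · simp [unnestL, unnestR, hx]
  · fin_cases i <;> simp [unnestL, unnestR, two_mul]

theorem eq_inl_of_unnestR_sub_unnestL_lt (p : V ⊕ Fin 3)
    (hp : unnestR R p - unnestL R p < unnestWidth R) :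
    ∃ x, p = inl x ∧ R.l (inr 0) ≤ R.l (inl x) := by
  rcases p with x | i
  · by_cases hx : R.l (inr 0) ≤ R.l (inl x)
    · exact ⟨x, rfl, hx⟩
    · simp [unnestL, unnestR, hx] at hp
  · fin_cases i <;> simp [unnestL, unnestR, two_mul] at hp

noncomputable def unnest (R : IntervalRep (Gbeta G)) (h : R.r (inr 0) < R.l (inr 2)) :
    IntervalRep (Gbeta G) :=
  .ofLE (unnestL R) (unnestR R) unnestL_le_unnestR fun _ _ => adj_iff_unnest h

theorem unnest_ssubset (h : R.r (inr 0) < R.l (inr 2)) {p q : V ⊕ Fin 3}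
    (hpq : (unnest R h).itv p ⊂ (unnest R h).itv q) :
    (unnest R h).itv p = R.itv p ∧ R.itv p ⊂ R.itv (inr 0) := by
  have hlen := sub_lt_sub_of_Icc_ssubset_Icc (unnestL_le_unnestR p) hpq
  obtain ⟨x, rfl, hx⟩ := eq_inl_of_unnestR_sub_unnestL_lt p
    (hlen.trans_le (unnestR_sub_unnestL_le h q))
  refine ⟨?_, Icc_ssubset_Icc_right (R.le _) hx (r_inl_lt_r_u h x)⟩
  simp [IntervalRep.itv, unnest, IntervalRep.ofLE, unnestL, unnestR, hx]

theorem nu_le_nuAt_u_of_u_lt_a₂ [Finite V] (h : R.r (inr 0) < R.l (inr 2)) :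
    nu (Gbeta G) ≤ R.nuAt (inr 0) :=
  (unnest R h).nu_le_nesting.trans (R.nesting_le_nuAt _ _ fun _ _ => unnest_ssubset h)

end Gbeta

/-- for every representation `R` of `G_β`, `ν_R(u) ≥ ν(G_β)`. -/
theorem stmt_7 {V : Type*} [Fintype V] (G : SimpleGraph V)
    (R : IntervalRep (Gbeta G)) :
    nu (Gbeta G) ≤ R.nuAt (Sum.inr 0) := by
  rcases Gbeta.u_lt_a₂_or_a₂_lt_u R with h | h
  · exact Gbeta.nu_le_nuAt_u_of_u_lt_a₂ h
  · simpa using Gbeta.nu_le_nuAt_u_of_u_lt_a₂ (R := R.neg) (by simpa using neg_lt_neg h)
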